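/- arXiv:1401.0310 — 4 statements merged into one kernel-verified Lean document; each statement's English description precedes it below -/
import Mathlib

section
/- Let I, I_1, I_2, … be semi-open intervals in ℝ^N (sets of the form [a_1,b_1) × ⋯ × [a_N,b_N)) such that the intervals I_1, I_2, … are pairwise disjoint and their union equals I. Then ∑_{n=1}^∞ μ(I_n) = μ(I), where μ([a_1,b_1) × ⋯ × [a_N,b_N)) = (b_1 − a_1)⋯(b_N − a_N). -/
open Filter Topology

/-- If pairwise disjoint semi-open intervals `Iₙ = ∏ₖ [Aₙₖ, Bₙₖ)` partition a semi-open
interval `I = ∏ₖ [aₖ, bₖ)` in `ℝ^N`, then `∑ₙ μ(Iₙ) = μ(I)` where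
`μ(∏ₖ [aₖ, bₖ)) = ∏ₖ (bₖ - aₖ)`. -/
theorem semiopen_interval_partition_measure (N : ℕ) (a b : Fin N → ℝ)
    (A B : ℕ → Fin N → ℝ)
    (hab : ∀ k, a k ≤ b k) (hAB : ∀ n k, A n k ≤ B n k)
    (hdisj : Pairwise fun m n => Disjoint
      (Set.univ.pi fun k => Set.Ico (A m k) (B m k))
      (Set.univ.pi fun k => Set.Ico (A n k) (B n k)))
    (hunion : (⋃ n, Set.univ.pi fun k => Set.Ico (A n k) (B n k)) =
      Set.univ.pi fun k => Set.Ico (a k) (b k)) :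
    HasSum (fun n => ∏ k, (B n k - A n k)) (∏ k, (b k - a k)) := by
  have hvol : ∀ (c d : Fin N → ℝ), (∀ k, c k ≤ d k) →
      MeasureTheory.volume (Set.univ.pi fun k => Set.Ico (c k) (d k)) =
        ENNReal.ofReal (∏ k, (d k - c k)) := by
    intro c d hcd
    rw [MeasureTheory.volume_pi_pi]
    simp only [Real.volume_Ico]
    rw [← ENNReal.ofReal_prod_of_nonneg]
    intro k _
    linarith [hcd k]
  have hmeas : ∀ n, MeasurableSet (Set.univ.pi fun k => Set.Ico (A n k) (B n k)) := by
    intro n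
    exact MeasurableSet.univ_pi fun k => measurableSet_Ico
  have key : ∑' n, ENNReal.ofReal (∏ k, (B n k - A n k)) =
      ENNReal.ofReal (∏ k, (b k - a k)) := by
    rw [← hvol a b hab, ← hunion, MeasureTheory.measure_iUnion hdisj hmeas]
    exact tsum_congr fun n => (hvol (A n) (B n) (hAB n)).symm
  have hfin : ∑' n, ENNReal.ofReal (∏ k, (B n k - A n k)) ≠ ⊤ := by
    rw [key]; exact ENNReal.ofReal_ne_top
  have h := ENNReal.hasSum_toReal hfin
  rw [← ENNReal.tsum_toReal_eq (fun n => ENNReal.ofReal_ne_top), key] at h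
  have hnn : ∀ n, 0 ≤ ∏ k, (B n k - A n k) := fun n =>
    Finset.prod_nonneg fun k _ => by linarith [hAB n k]
  have hnn' : 0 ≤ ∏ k, (b k - a k) :=
    Finset.prod_nonneg fun k _ => by linarith [hab k]
  simpa [ENNReal.toReal_ofReal, hnn, hnn'] using h
end

section
/- Let (f_n) be a pointwise non-increasing sequence of non-negative simple functions on ℝ^N such that lim_{n→∞} f_n(x) = 0 for every x ∈ ℝ^N. Then lim_{n→∞} ∫ f_n = 0. -/
/-!
The elementary integral `∑ λᵢ μ(Iᵢ)` of a step function on boxes is its Lebesgue integral, so the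
claim is the monotone convergence theorem for the Lebesgue integral, applied to the decreasing
integrable sequence `fₙ ↓ 0`.
-/

open Filter Topology MeasureTheory Set

namespace Real

variable {ι κ : Type*} [Fintype ι] [Fintype κ]

lemma integrable_indicator_pi_Ico (a b : ι → ℝ) (c : ℝ) :
    Integrable ((univ.pi fun k => Ico (a k) (b k)).indicator fun _ => c) :=
  (integrable_indicator_iff (MeasurableSet.univ_pi fun _ => measurableSet_Ico)).2 <|
    integrableOn_const <| by
      rw [volume_pi_Ico]
      exact ENNReal.prod_ne_top fun _ _ => ENNReal.ofReal_ne_top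

lemma integral_indicator_pi_Ico {a b : ι → ℝ} (hab : a ≤ b) (c : ℝ) :
    ∫ x, (univ.pi fun k => Ico (a k) (b k)).indicator (fun _ => c) x =
      c * ∏ k, (b k - a k) := by
  rw [integral_indicator_const _ (MeasurableSet.univ_pi fun _ => measurableSet_Ico),
    measureReal_def, volume_pi_Ico_toReal hab, smul_eq_mul, mul_comm]

lemma integrable_sum_indicator_pi_Ico (a b : κ → ι → ℝ) (c : κ → ℝ) :
    Integrable fun x =>
      ∑ i, (univ.pi fun k => Ico (a i k) (b i k)).indicator (fun _ => c i) x :=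
  integrable_finsetSum _ fun i _ => integrable_indicator_pi_Ico (a i) (b i) (c i)

lemma integral_sum_indicator_pi_Ico {a b : κ → ι → ℝ} (hab : ∀ i, a i ≤ b i) (c : κ → ℝ) :
    ∫ x, ∑ i, (univ.pi fun k => Ico (a i k) (b i k)).indicator (fun _ => c i) x =
      ∑ i, c i * ∏ k, (b i k - a i k) := by
  rw [integral_finsetSum _ fun i _ => integrable_indicator_pi_Ico (a i) (b i) (c i)]
  exact Finset.sum_congr rfl fun i _ => integral_indicator_pi_Ico (hab i) (c i)

end Real

theorem simple_functions_decreasing_to_zero_integral_general (N : ℕ)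
    (m : ℕ → ℕ) (lam : ∀ n, Fin (m n) → ℝ)
    (a b : ∀ n, Fin (m n) → Fin N → ℝ)
    (hab : ∀ n i k, a n i k ≤ b n i k)
    (f : ℕ → (Fin N → ℝ) → ℝ)
    (hf : ∀ n x, f n x = ∑ i, (Set.univ.pi fun k =>
      Set.Ico (a n i k) (b n i k)).indicator (fun _ => lam n i) x)
    (hmono : ∀ x, Antitone fun n => f n x)
    (hlim : ∀ x, Tendsto (fun n => f n x) atTop (𝓝 (0 : ℝ))) :
    Tendsto (fun n => ∑ i, lam n i * ∏ k, (b n i k - a n i k)) atTop (𝓝 (0 : ℝ)) := by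
  have hint : ∀ n, Integrable (f n) := fun n => by
    rw [funext (hf n)]
    exact Real.integrable_sum_indicator_pi_Ico (a n) (b n) (lam n)
  have hintegral : ∀ n, ∫ x, f n x = ∑ i, lam n i * ∏ k, (b n i k - a n i k) := fun n => by
    simp_rw [hf n]
    exact Real.integral_sum_indicator_pi_Ico (fun i k => hab n i k) (lam n)
  simpa [hintegral] using integral_tendsto_of_tendsto_of_antitone hint (integrable_zero _ _ _)
    (ae_of_all _ hmono) (ae_of_all _ hlim)

/-- If `(fₙ)` is a pointwise non-increasing sequence of non-negative simple functions on
`ℝ^N` (finite linear combinations of characteristic functions of semi-open intervals)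
with `fₙ(x) → 0` for every `x`, then `∫ fₙ → 0`, where the integral of a simple function
`∑ᵢ λᵢ χ_{Iᵢ}` is `∑ᵢ λᵢ μ(Iᵢ)`. -/
theorem simple_functions_decreasing_to_zero_integral (N : ℕ)
    (m : ℕ → ℕ) (lam : ∀ n, Fin (m n) → ℝ)
    (a b : ∀ n, Fin (m n) → Fin N → ℝ)
    (hab : ∀ n i k, a n i k ≤ b n i k)
    (f : ℕ → (Fin N → ℝ) → ℝ)
    (hf : ∀ n x, f n x = ∑ i, (Set.univ.pi fun k =>
      Set.Ico (a n i k) (b n i k)).indicator (fun _ => lam n i) x)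
    (hnonneg : ∀ n x, 0 ≤ f n x)
    (hmono : ∀ x, Antitone fun n => f n x)
    (hlim : ∀ x, Tendsto (fun n => f n x) atTop (𝓝 (0 : ℝ))) :
    Tendsto (fun n => ∑ i, lam n i * ∏ k, (b n i k - a n i k)) atTop (𝓝 (0 : ℝ)) :=
  simple_functions_decreasing_to_zero_integral_general N m lam a b hab f hf hmono hlim
end

section
/- Let (X, 𝒰, ∫) be a Daniell space and let (g_n) and (h_n) be pointwise non-decreasing sequences in 𝒰 such that lim_{n→∞} h_n(x) ≤ lim_{n→∞} g_n(x) (limits in [−∞,∞], which exist by monotonicity) for every x ∈ X. Then lim_{n→∞} ∫ h_n ≤ lim_{n→∞} ∫ g_n, where the limits are taken in [−∞,∞]. -/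
open Filter Topology

/-- A Daniell space: a Riesz space `U` of real-valued functions on `X` together with a
positive linear functional `integral` satisfying the Daniell continuity condition (II). -/
structure DaniellSpace (X : Type*) where
  U : Set (X → ℝ)
  integral : (X → ℝ) → ℝ
  zero_mem : (0 : X → ℝ) ∈ U
  add_mem : ∀ {f g : X → ℝ}, f ∈ U → g ∈ U → f + g ∈ U
  smul_mem : ∀ (c : ℝ) {f : X → ℝ}, f ∈ U → c • f ∈ U
  sup_mem : ∀ {f g : X → ℝ}, f ∈ U → g ∈ U → f ⊔ g ∈ U
  inf_mem : ∀ {f g : X → ℝ}, f ∈ U → g ∈ U → f ⊓ g ∈ U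
  integral_add : ∀ {f g : X → ℝ}, f ∈ U → g ∈ U →
    integral (f + g) = integral f + integral g
  integral_smul : ∀ (c : ℝ) {f : X → ℝ}, f ∈ U → integral (c • f) = c * integral f
  integral_nonneg : ∀ {f : X → ℝ}, f ∈ U → (∀ x, 0 ≤ f x) → 0 ≤ integral f
  integral_tendsto_zero : ∀ f : ℕ → X → ℝ, (∀ n, f n ∈ U) → Antitone f →
    (∀ x, Tendsto (fun n => f n x) atTop (𝓝 (0 : ℝ))) →
    Tendsto (fun n => integral (f n)) atTop (𝓝 (0 : ℝ))

/-- `f ≃ ∑ fₙ` : the `fₙ` belong to `U`, `∑ ∫|fₙ| < ∞`, and `f x = ∑ fₙ x` at every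
point where the series converges absolutely. -/
def DaniellSpace.Rep {X : Type*} (D : DaniellSpace X) (f : X → ℝ) (fs : ℕ → X → ℝ) : Prop :=
  (∀ n, fs n ∈ D.U) ∧ (Summable fun n => D.integral |fs n|) ∧
  ∀ x, (Summable fun n => |fs n x|) → HasSum (fun n => fs n x) (f x)

/-- The extension `𝒰*` of `𝒰`. -/
def DaniellSpace.Ustar {X : Type*} (D : DaniellSpace X) : Set (X → ℝ) :=
  {f | ∃ fs, D.Rep f fs}

-- The integral on `𝒰*`: `∫ f = ∑ ∫ fₙ` for any representation `f ≃ ∑ fₙ`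
-- (the value is independent of the representation).
open Classical in
noncomputable def DaniellSpace.integralStar {X : Type*} (D : DaniellSpace X)
    (f : X → ℝ) : ℝ :=
  if h : ∃ fs, D.Rep f fs then ∑' n, D.integral (h.choose n) else 0

/-- A Daniell space is complete if `f ≃ ∑ fₙ` with all `fₙ ∈ 𝒰` implies `f ∈ 𝒰`. -/
def DaniellSpace.Complete {X : Type*} (D : DaniellSpace X) : Prop :=
  ∀ (f : X → ℝ) (fs : ℕ → X → ℝ), D.Rep f fs → f ∈ D.U

/-- A null set: its characteristic function is a null function. -/
def DaniellSpace.NullSet {X : Type*} (D : DaniellSpace X) (S : Set X) : Prop :=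
  S.indicator (fun _ => (1 : ℝ)) ∈ D.U ∧ D.integral (S.indicator fun _ => (1 : ℝ)) = 0


namespace DaniellSpace

lemma sub_mem' {X : Type*} (D : DaniellSpace X) {f g : X → ℝ} (hf : f ∈ D.U) (hg : g ∈ D.U) :
    f - g ∈ D.U := by
  have := D.add_mem hf (D.smul_mem (-1) hg)
  simpa [sub_eq_add_neg] using this

lemma integral_mono' {X : Type*} (D : DaniellSpace X) {f g : X → ℝ} (hf : f ∈ D.U)
    (hg : g ∈ D.U) (hfg : f ≤ g) : D.integral f ≤ D.integral g := by
  have hsub : g - f ∈ D.U := D.sub_mem' hg hf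
  have h0 : 0 ≤ D.integral (g - f) :=
    D.integral_nonneg hsub (fun x => by simpa using hfg x)
  have heq : D.integral g = D.integral f + D.integral (g - f) := by
    have := D.integral_add hf hsub
    rw [show f + (g - f) = g from by ring] at this
    exact this
  linarith

end DaniellSpace

/-- If `(gₙ)` and `(hₙ)` are pointwise non-decreasing sequences in `𝒰` with
`lim hₙ(x) ≤ lim gₙ(x)` (limits in `[-∞,∞]`, i.e. suprema) for every `x`, then
`lim ∫hₙ ≤ lim ∫gₙ` in `[-∞,∞]`. -/
theorem daniell_monotone_limit_integral_le {X : Type*} [Nonempty X] (D : DaniellSpace X)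
    (g h : ℕ → X → ℝ) (hg : ∀ n, g n ∈ D.U) (hh : ∀ n, h n ∈ D.U)
    (hgmono : ∀ x, Monotone fun n => g n x) (hhmono : ∀ x, Monotone fun n => h n x)
    (hle : ∀ x, (⨆ n, (h n x : EReal)) ≤ ⨆ n, (g n x : EReal)) :
    (⨆ n, (D.integral (h n) : EReal)) ≤ ⨆ n, (D.integral (g n) : EReal) := by
  refine iSup_le fun m => ?_
  set T := ⨆ n, (D.integral (g n) : EReal) with hT
  rcases eq_or_ne T ⊤ with htop | htop
  · simp [htop]
  have hbot : T ≠ ⊥ := by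
    intro hb
    have := le_iSup (fun n => (D.integral (g n) : EReal)) 0
    rw [← hT, hb] at this
    exact (EReal.coe_ne_bot _) (le_bot_iff.mp this)
  lift T to ℝ using ⟨htop, hbot⟩ with t ht
  have hgt : ∀ n, D.integral (g n) ≤ t := by
    intro n
    have := le_iSup (fun n => (D.integral (g n) : EReal)) n
    rw [← hT] at this
    exact_mod_cast this
  set f : ℕ → X → ℝ := fun n => h m - (h m ⊓ g n) with hf
  have hfmem : ∀ n, f n ∈ D.U := fun n => D.sub_mem' (hh m) (D.inf_mem (hh m) (hg n))
  have hfanti : Antitone f := by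
    intro a b hab x
    simp only [hf, Pi.sub_apply, Pi.inf_apply]
    have : min (h m x) (g a x) ≤ min (h m x) (g b x) :=
      min_le_min le_rfl (hgmono x hab)
    linarith
  have hftend : ∀ x, Tendsto (fun n => f n x) atTop (𝓝 (0 : ℝ)) := by
    intro x
    have hmono : Monotone fun n => min (h m x) (g n x) :=
      fun a b hab => min_le_min le_rfl (hgmono x hab)
    have hbdd : BddAbove (Set.range fun n => min (h m x) (g n x)) :=
      ⟨h m x, by rintro _ ⟨n, rfl⟩; exact min_le_left _ _⟩
    have htend := tendsto_atTop_ciSup hmono hbdd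
    have hsup : (⨆ n, min (h m x) (g n x)) = h m x := by
      refine le_antisymm (ciSup_le fun n => min_le_left _ _) ?_
      by_contra hc
      push_neg at hc
      set c := ⨆ n, min (h m x) (g n x) with hcdef
      have hglt : ∀ n, g n x ≤ c := by
        intro n
        have h1 : min (h m x) (g n x) ≤ c := le_ciSup hbdd n
        by_contra hgc
        push_neg at hgc
        have : min (h m x) (g n x) = g n x ∨ min (h m x) (g n x) = h m x := by
          rcases le_total (h m x) (g n x) with hle' | hle'
          · right; exact min_eq_left hle'
          · left; exact min_eq_right hle'
        rcases this with heq | heq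
        · rw [heq] at h1; exact absurd h1 (not_le.mpr hgc)
        · rw [heq] at h1; exact absurd h1 (not_le.mpr hc)
      have h2 : (⨆ n, (g n x : EReal)) ≤ (c : EReal) :=
        iSup_le fun n => EReal.coe_le_coe_iff.mpr (hglt n)
      have h3 : (h m x : EReal) ≤ ⨆ n, (h n x : EReal) :=
        le_iSup (fun n => (h n x : EReal)) m
      have h4 : (h m x : EReal) ≤ (c : EReal) := h3.trans ((hle x).trans h2)
      exact absurd (EReal.coe_le_coe_iff.mp h4) (not_le.mpr hc)
    have h0 : Tendsto (fun n => h m x - min (h m x) (g n x)) atTop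
        (𝓝 (h m x - h m x)) := by
      rw [hsup] at htend
      exact tendsto_const_nhds.sub htend
    simpa [hf] using h0
  have hint0 : Tendsto (fun n => D.integral (f n)) atTop (𝓝 (0 : ℝ)) :=
    D.integral_tendsto_zero f hfmem hfanti hftend
  have key : ∀ n, D.integral (h m) ≤ D.integral (f n) + t := by
    intro n
    have hinf : h m ⊓ g n ∈ D.U := D.inf_mem (hh m) (hg n)
    have heq : D.integral (f n) + D.integral (h m ⊓ g n) = D.integral (h m) := by
      have := D.integral_add (hfmem n) hinf
      rw [show f n + (h m ⊓ g n) = h m from by simp [hf]] at this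
      exact this.symm
    have hle1 : D.integral (h m ⊓ g n) ≤ D.integral (g n) :=
      D.integral_mono' hinf (hg n) (fun x => min_le_right _ _)
    have := hgt n
    linarith
  have hfinal : D.integral (h m) ≤ t := by
    have := ge_of_tendsto' (hint0.add_const t) key
    simpa using this
  exact EReal.coe_le_coe_iff.mpr hfinal
end

section
/- Let (X, 𝒰, ∫) be a complete Daniell space, let f_1, f_2, … ∈ 𝒰 with ∑_{n=1}^∞ ∫|f_n| < ∞, and let f : X → ℝ. Then f(x) = ∑_{n=1}^∞ f_n(x) for all x outside a null set if and only if f ∈ 𝒰 and ∫|f − (f_1 + ⋯ + f_n)| → 0 as n → ∞. -/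
open Filter Topology

/-! ### Auxiliary lemmas -/

section Aux

variable {X : Type*} (D : DaniellSpace X)

lemma DS_neg_mem {f : X → ℝ} (hf : f ∈ D.U) : -f ∈ D.U := by
  have := D.smul_mem (-1) hf
  simpa using this

lemma DS_sub_mem {f g : X → ℝ} (hf : f ∈ D.U) (hg : g ∈ D.U) : f - g ∈ D.U := by
  have := D.add_mem hf (DS_neg_mem D hg)
  simpa [sub_eq_add_neg] using this

lemma DS_abs_mem {f : X → ℝ} (hf : f ∈ D.U) : |f| ∈ D.U := by
  have : f ⊔ (-f) ∈ D.U := D.sup_mem hf (DS_neg_mem D hf)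
  exact this

lemma DS_int_zero : D.integral 0 = 0 := by
  have := D.integral_smul 0 D.zero_mem
  simpa using this

lemma DS_int_mono {f g : X → ℝ} (hf : f ∈ D.U) (hg : g ∈ D.U) (h : ∀ x, f x ≤ g x) :
    D.integral f ≤ D.integral g := by
  have hsub : g - f ∈ D.U := DS_sub_mem D hg hf
  have h1 : D.integral ((g - f) + f) = D.integral (g - f) + D.integral f :=
    D.integral_add hsub hf
  rw [sub_add_cancel] at h1
  have h2 : 0 ≤ D.integral (g - f) :=
    D.integral_nonneg hsub (fun x => by simpa using sub_nonneg.2 (h x))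
  linarith

lemma DS_int_abs_nonneg {f : X → ℝ} (hf : f ∈ D.U) : 0 ≤ D.integral |f| :=
  D.integral_nonneg (DS_abs_mem D hf) (fun x => abs_nonneg _)

lemma DS_finsum_mem (F : ℕ → X → ℝ) (hF : ∀ i, F i ∈ D.U) (n : ℕ) :
    (∑ i ∈ Finset.range n, F i) ∈ D.U := by
  induction n with
  | zero => simpa using D.zero_mem
  | succ n ih =>
    rw [Finset.sum_range_succ]
    exact D.add_mem ih (hF n)

lemma DS_int_finsum (F : ℕ → X → ℝ) (hF : ∀ i, F i ∈ D.U) (n : ℕ) :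
    D.integral (∑ i ∈ Finset.range n, F i) = ∑ i ∈ Finset.range n, D.integral (F i) := by
  induction n with
  | zero => simpa using DS_int_zero D
  | succ n ih =>
    rw [Finset.sum_range_succ, Finset.sum_range_succ,
      D.integral_add (DS_finsum_mem D F hF n) (hF n), ih]

/-- Interleaving of two sequences. -/
def itl {α : Type*} (A B : ℕ → α) : ℕ → α := fun n => if n % 2 = 0 then A (n / 2) else B (n / 2)

@[simp] lemma itl_even {α : Type*} (A B : ℕ → α) (k : ℕ) : itl A B (2 * k) = A k := by
  have h1 : (2 * k) % 2 = 0 := by omega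
  have h2 : (2 * k) / 2 = k := by omega
  simp [itl, h1, h2]

@[simp] lemma itl_odd {α : Type*} (A B : ℕ → α) (k : ℕ) : itl A B (2 * k + 1) = B k := by
  have h1 : (2 * k + 1) % 2 = 1 := by omega
  have h2 : (2 * k + 1) / 2 = k := by omega
  simp [itl, h1, h2]

lemma itl_map {α β : Type*} (u : α → β) (A B : ℕ → α) (n : ℕ) :
    u (itl A B n) = itl (fun k => u (A k)) (fun k => u (B k)) n := by
  by_cases h : n % 2 = 0 <;> simp [itl, h]

lemma hasSum_itl {a b : ℕ → ℝ} {s t : ℝ} (ha : HasSum a s) (hb : HasSum b t) :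
    HasSum (itl a b) (s + t) :=
  HasSum.even_add_odd (by simpa only [itl_even] using ha) (by simpa only [itl_odd] using hb)

lemma summable_itl_left {a b : ℕ → ℝ} (h : Summable (itl a b)) : Summable a := by
  have hinj : Function.Injective (fun k : ℕ => 2 * k) := fun i j hij => by
    have h2 : 2 * i = 2 * j := hij
    omega
  have := h.comp_injective hinj
  simpa only [Function.comp_def, itl_even] using this

lemma summable_itl_right {a b : ℕ → ℝ} (h : Summable (itl a b)) : Summable b := by
  have hinj : Function.Injective (fun k : ℕ => 2 * k + 1) := fun i j hij => by
    have h2 : 2 * i + 1 = 2 * j + 1 := hij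
    omega
  have := h.comp_injective hinj
  simpa only [Function.comp_def, itl_odd] using this

lemma itl_int_abs (F G : ℕ → X → ℝ) :
    (fun n => D.integral |itl F G n|) =
      itl (fun k => D.integral |F k|) (fun k => D.integral |G k|) :=
  funext fun n => itl_map (fun g => D.integral |g|) F G n

lemma itl_eval (F G : ℕ → X → ℝ) (x : X) :
    (fun n => itl F G n x) = itl (fun k => F k x) (fun k => G k x) :=
  funext fun n => itl_map (fun g => g x) F G n

lemma itl_abs_eval (F G : ℕ → X → ℝ) (x : X) :
    (fun n => |itl F G n x|) = itl (fun k => |F k x|) (fun k => |G k x|) :=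
  funext fun n => itl_map (fun g => |g x|) F G n

/-- Key lemma: if `h ∈ U` has a representation `h ≃ ∑ gₙ`, then `∫|h| ≤ ∑ ∫|gₙ|`. -/
lemma DS_norm_le (h : X → ℝ) (hh : h ∈ D.U) (gs : ℕ → X → ℝ) (hgs : ∀ n, gs n ∈ D.U)
    (hs : Summable fun n => D.integral |gs n|)
    (hpt : ∀ x, (Summable fun n => |gs n x|) → HasSum (fun n => gs n x) (h x)) :
    D.integral |h| ≤ ∑' n, D.integral |gs n| := by
  set T : ℕ → X → ℝ := fun N => ∑ k ∈ Finset.range N, |gs k| with hT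
  have hTmem : ∀ N, T N ∈ D.U := fun N =>
    DS_finsum_mem D _ (fun i => DS_abs_mem D (hgs i)) N
  have hTval : ∀ N x, T N x = ∑ k ∈ Finset.range N, |gs k x| := by
    intro N x
    simp [hT, Finset.sum_apply]
  set φ : ℕ → X → ℝ := fun N => (|h| - T N) ⊔ 0 with hφ
  have hφmem : ∀ N, φ N ∈ D.U := fun N =>
    D.sup_mem (DS_sub_mem D (DS_abs_mem D hh) (hTmem N)) D.zero_mem
  have hφval : ∀ N x, φ N x = (|h x| - T N x) ⊔ 0 := fun N x => rfl
  have hmonoT : ∀ {N M : ℕ}, N ≤ M → ∀ x, T N x ≤ T M x := by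
    intro N M hNM x
    rw [hTval, hTval]
    exact Finset.sum_le_sum_of_subset_of_nonneg (Finset.range_subset_range.2 hNM)
      (fun i _ _ => abs_nonneg _)
  have hanti : Antitone φ := by
    intro N M hNM
    have : ∀ x, φ M x ≤ φ N x := by
      intro x
      rw [hφval, hφval]
      exact sup_le_sup_right (by linarith [hmonoT hNM x]) 0
    exact this
  have hptz : ∀ x, Tendsto (fun N => φ N x) atTop (𝓝 (0:ℝ)) := by
    intro x
    by_cases hx : Summable fun n => |gs n x|
    · have hhx : HasSum (fun n => gs n x) (h x) := hpt x hx
      have hle : |h x| ≤ ∑' n, |gs n x| := by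
        have h1 : |h x| = |∑' n, gs n x| := by rw [hhx.tsum_eq]
        have h2 : ‖∑' n, gs n x‖ ≤ ∑' n, ‖gs n x‖ :=
          norm_tsum_le_tsum_norm (by simpa [Real.norm_eq_abs] using hx)
        simpa [Real.norm_eq_abs, h1] using h2
      have hTt : Tendsto (fun N => T N x) atTop (𝓝 (∑' n, |gs n x|)) := by
        have := hx.hasSum.tendsto_sum_nat
        simpa [hTval] using this
      have hmax : Tendsto (fun N => (|h x| - T N x) ⊔ 0) atTop
          (𝓝 ((|h x| - ∑' n, |gs n x|) ⊔ 0)) :=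
        (tendsto_const_nhds.sub hTt).sup_nhds tendsto_const_nhds
      have heq : (|h x| - ∑' n, |gs n x|) ⊔ 0 = 0 :=
        sup_eq_right.2 (sub_nonpos.2 hle)
      rw [heq] at hmax
      simpa [hφval] using hmax
    · have hdiv : Tendsto (fun N => ∑ i ∈ Finset.range N, |gs i x|) atTop atTop :=
        (not_summable_iff_tendsto_nat_atTop_of_nonneg (fun n => abs_nonneg _)).1 hx
      have hev : ∀ᶠ N in atTop, φ N x = 0 := by
        filter_upwards [hdiv.eventually_ge_atTop (|h x|)] with N hN
        have hle : |h x| - T N x ≤ 0 := by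
          rw [hTval]; linarith
        rw [hφval]
        exact sup_eq_right.2 hle
      exact Tendsto.congr' (hev.mono fun N hN => hN.symm) tendsto_const_nhds
  have hint : Tendsto (fun N => D.integral (φ N)) atTop (𝓝 0) :=
    D.integral_tendsto_zero φ hφmem hanti hptz
  have key : ∀ N, D.integral |h| - ∑' n, D.integral |gs n| ≤ D.integral (φ N) := by
    intro N
    have h1 : D.integral |h| ≤ D.integral (φ N + T N) := by
      refine DS_int_mono D (DS_abs_mem D hh) (D.add_mem (hφmem N) (hTmem N)) ?_
      intro x
      have := le_sup_left (a := |h x| - T N x) (b := (0:ℝ))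
      have hxv : (φ N + T N) x = ((|h x| - T N x) ⊔ 0) + T N x := rfl
      rw [Pi.abs_apply, hxv]
      linarith
    have h2 : D.integral (φ N + T N) = D.integral (φ N) + D.integral (T N) :=
      D.integral_add (hφmem N) (hTmem N)
    have h3 : D.integral (T N) = ∑ k ∈ Finset.range N, D.integral |gs k| :=
      DS_int_finsum D _ (fun i => DS_abs_mem D (hgs i)) N
    have h4 : ∑ k ∈ Finset.range N, D.integral |gs k| ≤ ∑' n, D.integral |gs n| :=
      Summable.sum_le_tsum _ (fun i _ => DS_int_abs_nonneg D (hgs i)) hs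
    linarith
  have hfin : D.integral |h| - ∑' n, D.integral |gs n| ≤ 0 :=
    ge_of_tendsto hint (Eventually.of_forall key)
  linarith

/-- The divergence set of an absolutely convergent series is null. -/
lemma DS_null_div (hD : D.Complete) (gs : ℕ → X → ℝ) (hgs : ∀ n, gs n ∈ D.U)
    (hs : Summable fun n => D.integral |gs n|) :
    D.NullSet {x | ¬ Summable fun n => |gs n x|} := by
  set S : Set X := {x | ¬ Summable fun n => |gs n x|} with hS
  set χ : X → ℝ := S.indicator fun _ => 1 with hχ
  have hχnonneg : ∀ x, 0 ≤ χ x := fun x => Set.indicator_nonneg (fun _ _ => zero_le_one) x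
  have habsneg : ∀ n : ℕ, |(-(gs n) : X → ℝ)| = |gs n| := fun n => abs_neg _
  have main : ∀ m : ℕ, D.Rep χ (itl (fun k => gs (k + m)) (fun k => -(gs (k + m)))) := by
    intro m
    refine ⟨?_, ?_, ?_⟩
    · intro n
      by_cases hp : n % 2 = 0
      · simpa [itl, hp] using hgs _
      · simpa [itl, hp] using DS_neg_mem D (hgs _)
    · rw [itl_int_abs]
      have htail : Summable fun k => D.integral |gs (k + m)| :=
        (summable_nat_add_iff (f := fun j => D.integral |gs j|) m).2 hs
      have : HasSum (itl (fun k => D.integral |gs (k + m)|)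
          (fun k => D.integral |(-(gs (k + m)) : X → ℝ)|))
          ((∑' k, D.integral |gs (k + m)|) + ∑' k, D.integral |gs (k + m)|) := by
        refine hasSum_itl htail.hasSum ?_
        simpa [habsneg] using htail.hasSum
      exact this.summable
    · intro x hx
      rw [itl_abs_eval] at hx
      have hxa : Summable fun k => |gs (k + m) x| := by
        have := summable_itl_left hx
        exact this
      have hxfull : Summable fun n => |gs n x| := (summable_nat_add_iff (f := fun j => |gs j x|) m).1 hxa
      have hxS : x ∉ S := by
        simp only [hS, Set.mem_setOf_eq, not_not]
        exact hxfull
      have hχ0 : χ x = 0 := Set.indicator_of_notMem hxS _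
      have hsum0 : HasSum (fun k => gs (k + m) x) (∑' k, gs (k + m) x) :=
        (Summable.of_abs hxa).hasSum
      have : HasSum (itl (fun k => gs (k + m) x) (fun k => -(gs (k + m) x)))
          ((∑' k, gs (k + m) x) + -(∑' k, gs (k + m) x)) :=
        hasSum_itl hsum0 hsum0.neg
      rw [add_neg_cancel] at this
      have heval : (fun n => itl (fun k => gs (k + m)) (fun k => -(gs (k + m))) n x)
          = itl (fun k => gs (k + m) x) (fun k => -(gs (k + m) x)) := by
        rw [itl_eval]
        rfl
      rw [heval, hχ0]
      exact this
  have hmem : χ ∈ D.U := hD χ _ (main 0)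
  have habsχ : |χ| = χ := by
    funext x
    exact abs_of_nonneg (hχnonneg x)
  have hle : ∀ m : ℕ, D.integral χ ≤
      (∑' k, D.integral |gs (k + m)|) + ∑' k, D.integral |gs (k + m)| := by
    intro m
    obtain ⟨h1, h2, h3⟩ := main m
    have := DS_norm_le D χ hmem _ h1 h2 h3
    rw [habsχ] at this
    refine this.trans_eq ?_
    rw [itl_int_abs]
    have htail : Summable fun k => D.integral |gs (k + m)| :=
      (summable_nat_add_iff (f := fun j => D.integral |gs j|) m).2 hs
    have hhs : HasSum (itl (fun k => D.integral |gs (k + m)|)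
        (fun k => D.integral |(-(gs (k + m)) : X → ℝ)|))
        ((∑' k, D.integral |gs (k + m)|) + ∑' k, D.integral |gs (k + m)|) := by
      refine hasSum_itl htail.hasSum ?_
      simpa [habsneg] using htail.hasSum
    exact hhs.tsum_eq
  have hlim : Tendsto (fun m => (∑' k, D.integral |gs (k + m)|)
      + ∑' k, D.integral |gs (k + m)|) atTop (𝓝 (0:ℝ)) := by
    have h0 : Tendsto (fun m => ∑' k, D.integral |gs (k + m)|) atTop (𝓝 (0:ℝ)) :=
      tendsto_sum_nat_add (fun j => D.integral |gs j|)
    simpa using h0.add h0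
  have hle0 : D.integral χ ≤ 0 := ge_of_tendsto hlim (Eventually.of_forall hle)
  have hge0 : 0 ≤ D.integral χ := D.integral_nonneg hmem hχnonneg
  exact ⟨hmem, le_antisymm hle0 hge0⟩

end Aux

/-- In a complete Daniell space, for `fₙ ∈ 𝒰` with `∑ ∫|fₙ| < ∞`:
`f = f₁ + f₂ + ⋯` almost everywhere iff `f ∈ 𝒰` and `f = f₁ + f₂ + ⋯` in norm. -/
theorem daniell_ae_sum_iff_norm_sum {X : Type*} [Nonempty X] (D : DaniellSpace X)
    (hD : D.Complete) (fs : ℕ → X → ℝ) (hfs : ∀ n, fs n ∈ D.U)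
    (hsum : Summable fun n => D.integral |fs n|) (f : X → ℝ) :
    (∃ S : Set X, D.NullSet S ∧ ∀ x ∉ S, HasSum (fun n => fs n x) (f x)) ↔
    (f ∈ D.U ∧ Tendsto (fun n => D.integral |f - ∑ i ∈ Finset.range n, fs i|) atTop
      (𝓝 (0 : ℝ))) := by
  constructor
  · rintro ⟨S, ⟨hχU, hχ0⟩, hae⟩
    set χ : X → ℝ := S.indicator fun _ => 1 with hχdef
    have hχnonneg : ∀ x, 0 ≤ χ x := fun x => Set.indicator_nonneg (fun _ _ => zero_le_one) x
    have habsχ : |χ| = χ := by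
      funext x; exact abs_of_nonneg (hχnonneg x)
    set Bs : ℕ → X → ℝ := fun k => if k % 2 = 0 then χ else -χ with hBs
    have hBmem : ∀ k, Bs k ∈ D.U := by
      intro k
      by_cases hp : k % 2 = 0
      · simpa [hBs, hp] using hχU
      · simpa [hBs, hp] using DS_neg_mem D hχU
    have hBint : ∀ k, D.integral |Bs k| = 0 := by
      intro k
      by_cases hp : k % 2 = 0 <;> simp [hBs, hp, abs_neg, habsχ, hχ0]
    have hBint' : (fun k => D.integral |Bs k|) = fun _ => (0:ℝ) := funext hBint
    have hBval : ∀ x, x ∉ S → ∀ k, Bs k x = 0 := by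
      intro x hx k
      have hχ0x : χ x = 0 := Set.indicator_of_notMem hx _
      by_cases hp : k % 2 = 0 <;> simp [hBs, hp, hχ0x]
    have hBnot : ∀ x, x ∈ S → ¬ Summable fun k => |Bs k x| := by
      intro x hx hsummable
      have hχ1 : χ x = 1 := Set.indicator_of_mem hx _
      have hone : (fun k => |Bs k x|) = fun _ => (1:ℝ) := by
        funext k
        by_cases hp : k % 2 = 0 <;> simp [hBs, hp, hχ1]
      rw [hone] at hsummable
      have h1 := hsummable.tendsto_atTop_zero
      have h2 : Tendsto (fun _ : ℕ => (1:ℝ)) atTop (𝓝 1) := tendsto_const_nhds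
      have := tendsto_nhds_unique h1 h2
      norm_num at this
    -- membership of x outside S from summability of interleaving
    have hnotS : ∀ (n : ℕ) (x : X),
        (Summable fun j => |itl (fun k => fs (k + n)) Bs j x|) →
        x ∉ S ∧ Summable fun k => |fs (k + n) x| := by
      intro n x hx
      rw [itl_abs_eval] at hx
      have hB : Summable fun k => |Bs k x| := summable_itl_right hx
      have hxS : x ∉ S := fun hmem => hBnot x hmem hB
      exact ⟨hxS, summable_itl_left hx⟩
    have hRep : ∀ n : ℕ, D.Rep (f - ∑ i ∈ Finset.range n, fs i)
        (itl (fun k => fs (k + n)) Bs) := by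
      intro n
      refine ⟨?_, ?_, ?_⟩
      · intro j
        by_cases hp : j % 2 = 0
        · simpa [itl, hp] using hfs _
        · simpa [itl, hp] using hBmem _
      · rw [itl_int_abs]
        have htail : Summable fun k => D.integral |fs (k + n)| :=
          (summable_nat_add_iff (f := fun j => D.integral |fs j|) n).2 hsum
        have : HasSum (itl (fun k => D.integral |fs (k + n)|) (fun k => D.integral |Bs k|))
            ((∑' k, D.integral |fs (k + n)|) + 0) := by
          refine hasSum_itl htail.hasSum ?_
          rw [hBint']
          exact hasSum_zero
        exact this.summable
      · intro x hx
        obtain ⟨hxS, hxa⟩ := hnotS n x hx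
        have hfx : HasSum (fun k => fs k x) (f x) := hae x hxS
        have htail : HasSum (fun k => fs (k + n) x)
            (f x - ∑ i ∈ Finset.range n, fs i x) := by
          refine (hasSum_nat_add_iff (f := fun j => fs j x) n).2 ?_
          simpa using hfx
        have hBx : HasSum (fun k => Bs k x) 0 := by
          have : (fun k => Bs k x) = fun _ => (0:ℝ) := funext fun k => hBval x hxS k
          rw [this]
          exact hasSum_zero
        have hcomb : HasSum (itl (fun k => fs (k + n) x) (fun k => Bs k x))
            ((f x - ∑ i ∈ Finset.range n, fs i x) + 0) := hasSum_itl htail hBx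
        have heval : (fun j => itl (fun k => fs (k + n)) Bs j x)
            = itl (fun k => fs (k + n) x) (fun k => Bs k x) := by
          rw [itl_eval]
        rw [heval]
        have hvx : (f - ∑ i ∈ Finset.range n, fs i) x
            = f x - ∑ i ∈ Finset.range n, fs i x := by
          simp [Finset.sum_apply]
        rw [hvx]
        simpa using hcomb
    have hfmem : f ∈ D.U := by
      have h0 := hRep 0
      have : f - ∑ i ∈ Finset.range 0, fs i = f := by simp
      rw [this] at h0
      exact hD f _ h0
    refine ⟨hfmem, ?_⟩
    have hrn : ∀ n, (f - ∑ i ∈ Finset.range n, fs i) ∈ D.U :=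
      fun n => DS_sub_mem D hfmem (DS_finsum_mem D fs hfs n)
    have hbound : ∀ n, D.integral |f - ∑ i ∈ Finset.range n, fs i|
        ≤ ∑' k, D.integral |fs (k + n)| := by
      intro n
      obtain ⟨h1, h2, h3⟩ := hRep n
      have hkey := DS_norm_le D _ (hrn n) _ h1 h2 h3
      refine hkey.trans_eq ?_
      rw [itl_int_abs]
      have htail : Summable fun k => D.integral |fs (k + n)| :=
        (summable_nat_add_iff (f := fun j => D.integral |fs j|) n).2 hsum
      have hhs : HasSum (itl (fun k => D.integral |fs (k + n)|) (fun k => D.integral |Bs k|))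
          ((∑' k, D.integral |fs (k + n)|) + 0) := by
        refine hasSum_itl htail.hasSum ?_
        rw [hBint']
        exact hasSum_zero
      rw [hhs.tsum_eq, add_zero]
    refine squeeze_zero (fun n => DS_int_abs_nonneg D (hrn n)) hbound ?_
    exact tendsto_sum_nat_add (fun j => D.integral |fs j|)
  · rintro ⟨hfU, hTen⟩
    have hrn : ∀ n, (f - ∑ i ∈ Finset.range n, fs i) ∈ D.U :=
      fun n => DS_sub_mem D hfU (DS_finsum_mem D fs hfs n)
    -- choose indices m k with ∫|f - S_{m k}| ≤ (1/2)^k and m k ≥ k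
    have hchoice : ∀ k : ℕ, ∃ N : ℕ, ∀ n ≥ N,
        D.integral |f - ∑ i ∈ Finset.range n, fs i| ≤ (1/2 : ℝ) ^ k := by
      intro k
      have hpos : (0:ℝ) < (1/2 : ℝ) ^ k := by positivity
      have hev : ∀ᶠ n in atTop,
          D.integral |f - ∑ i ∈ Finset.range n, fs i| < (1/2 : ℝ) ^ k :=
        hTen.eventually (gt_mem_nhds hpos)
      obtain ⟨N, hN⟩ := eventually_atTop.1 hev
      exact ⟨N, fun n hn => (hN n hn).le⟩
    choose N hN using hchoice
    set m : ℕ → ℕ := fun k => max (N k) k with hm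
    set g : ℕ → X → ℝ := fun k => f - ∑ i ∈ Finset.range (m k), fs i with hg
    have hgmem : ∀ k, g k ∈ D.U := fun k => hrn (m k)
    have hgbound : ∀ k, D.integral |g k| ≤ (1/2 : ℝ) ^ k :=
      fun k => hN k (m k) (le_max_left _ _)
    have hgsum : Summable fun k => D.integral |g k| :=
      Summable.of_nonneg_of_le (fun k => DS_int_abs_nonneg D (hgmem k)) hgbound
        summable_geometric_two
    set G : ℕ → X → ℝ := itl fs g with hG
    have hGmem : ∀ n, G n ∈ D.U := by
      intro n
      by_cases hp : n % 2 = 0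
      · simpa [hG, itl, hp] using hfs _
      · simpa [hG, itl, hp] using hgmem _
    have hGsum : Summable fun n => D.integral |G n| := by
      rw [hG, itl_int_abs]
      exact (hasSum_itl hsum.hasSum hgsum.hasSum).summable
    refine ⟨{x | ¬ Summable fun n => |G n x|}, DS_null_div D hD G hGmem hGsum, ?_⟩
    intro x hx
    have hxs : Summable fun n => |G n x| := by
      by_contra hcon
      exact hx hcon
    rw [hG, itl_abs_eval] at hxs
    have hfa : Summable fun k => |fs k x| := summable_itl_left hxs
    have hga : Summable fun k => |g k x| := summable_itl_right hxs
    have hA : HasSum (fun k => fs k x) (∑' k, fs k x) := (Summable.of_abs hfa).hasSum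
    have hpart : Tendsto (fun n => ∑ i ∈ Finset.range n, fs i x) atTop
        (𝓝 (∑' k, fs k x)) := hA.tendsto_sum_nat
    have hmt : Tendsto m atTop atTop :=
      tendsto_atTop_mono (fun k => le_max_right (N k) k) tendsto_id
    have hcomp : Tendsto (fun k => ∑ i ∈ Finset.range (m k), fs i x) atTop
        (𝓝 (∑' k, fs k x)) := hpart.comp hmt
    have hg0 : Tendsto (fun k => g k x) atTop (𝓝 0) :=
      (Summable.of_abs hga).tendsto_atTop_zero
    have hgval : ∀ k, g k x = f x - ∑ i ∈ Finset.range (m k), fs i x := by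
      intro k
      simp [hg, Finset.sum_apply]
    have hg0' : Tendsto (fun k => f x - ∑ i ∈ Finset.range (m k), fs i x) atTop (𝓝 0) := by
      refine hg0.congr fun k => hgval k
    have hlim2 : Tendsto (fun k => f x - ∑ i ∈ Finset.range (m k), fs i x) atTop
        (𝓝 (f x - ∑' k, fs k x)) := tendsto_const_nhds.sub hcomp
    have hzero : f x - ∑' k, fs k x = 0 := tendsto_nhds_unique hlim2 hg0'
    have : (∑' k, fs k x) = f x := by linarith
    rw [← this]
    exact hA
end
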